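/- Let G = {(x,y,z,t) ∈ ℝ⁴ : y²t²−x⁴ = (x²+y²−2t²)⁴, z = 0, |y| ≤ t ≤ 1}. Then there exist ε ∈ (0,1) and a continuous function f : [0,ε) → ℝ with f(0) = 0 and f(t) > 0 for t > 0 such that G ∩ {x = 0, 0 ≤ t < ε} = {(0, y, 0, t) : 0 ≤ t < ε and (y = f(t) or y = −f(t))}, and f(t)/t³ → 4 as t → 0⁺. In particular, the two branches of G over x = 0 have tangency order 3 at the origin. -/

import Mathlib

/-!
On the slice `x = 0`, `0 < t ≤ 1`, the surface reads `y²t² = (y² - 2t²)⁴`. Writing `|y| = t s²`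
with `s ∈ [0, 1]`, this becomes `s⁴ = t⁴ (2 - s⁴)⁴`, i.e. `t = s / (2 - s⁴)`. That map is a
strictly increasing continuous bijection of `[0, 1]`, so its inverse `ψ` is continuous and the
branches are `y = ±t ψ(t)²`; they are the only points of the slice because
`v ↦ v t² - (v - 2t²)⁴` is strictly increasing for `v ≤ 2t²`. Finally
`t ψ(t)² / t³ = (ψ(t) / t)² = (2 - ψ(t)⁴)² → 4`.
-/

open Set Metric Filter

noncomputable section

/-- The surface `G` of Example 4 in `ℝ⁴` (coordinates `x = p 0`, `y = p 1`, `z = p 2`,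
`t = p 3`): `y²t² - x⁴ = (x² + y² - 2t²)⁴`, `z = 0`, `|y| ≤ t ≤ 1`. -/
def SurfaceG : Set (EuclideanSpace ℝ (Fin 4)) :=
  {p | p 1 ^ 2 * p 3 ^ 2 - p 0 ^ 4 = (p 0 ^ 2 + p 1 ^ 2 - 2 * p 3 ^ 2) ^ 4 ∧
        p 2 = 0 ∧ |p 1| ≤ p 3 ∧ p 3 ≤ 1}

theorem StrictMonoOn.exists_continuous_rightInvOn_Icc {α β : Type*}
    [ConditionallyCompleteLinearOrder α] [TopologicalSpace α] [OrderTopology α] [DenselyOrdered α]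
    [LinearOrder β] [TopologicalSpace β] [OrderTopology β]
    {φ : α → β} {a b : α} (hab : a ≤ b) (hmono : StrictMonoOn φ (Icc a b))
    (hcont : ContinuousOn φ (Icc a b)) :
    ∃ ψ : β → α, Continuous ψ ∧ (∀ t, ψ t ∈ Icc a b) ∧ RightInvOn ψ φ (Icc (φ a) (φ b)) := by
  have himage := hcont.image_Icc_of_monotoneOn hab hmono.monotoneOn
  have hmaps : MapsTo φ (Icc a b) (Icc (φ a) (φ b)) := himage ▸ mapsTo_image φ _
  have hsurj : (hmaps.restrict).Surjective := by
    rintro ⟨t, ht⟩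
    obtain ⟨s, hs, rfl⟩ := himage.symm ▸ ht
    exact ⟨⟨s, hs⟩, rfl⟩
  let e := StrictMono.orderIsoOfSurjective hmaps.restrict (fun s s' h => hmono s.2 s'.2 h) hsurj
  have hφab : φ a ≤ φ b := hmono.monotoneOn (left_mem_Icc.2 hab) (right_mem_Icc.2 hab) hab
  refine ⟨fun t => e.symm (projIcc _ _ hφab t), ?_, fun t => (e.symm _).2, fun t ht => ?_⟩
  · exact continuous_subtype_val.comp (e.symm.continuous.comp continuous_projIcc)
  · simp only [projIcc_of_mem hφab ht]
    exact congrArg Subtype.val (e.apply_symm_apply ⟨t, ht⟩)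

namespace SurfaceG

def branchParam (s : ℝ) : ℝ := s / (2 - s ^ 4)

lemma branchParam_zero : branchParam 0 = 0 := by norm_num [branchParam]

lemma branchParam_one : branchParam 1 = 1 := by norm_num [branchParam]

lemma two_sub_pow_four_pos {s : ℝ} (hs : s ∈ Icc (0 : ℝ) 1) : 0 < 2 - s ^ 4 := by
  nlinarith [pow_le_one₀ hs.1 hs.2 (n := 4)]

lemma branchParam_strictMonoOn : StrictMonoOn branchParam (Icc 0 1) := by
  intro a ha b hb hab
  calc a / (2 - a ^ 4) < b / (2 - a ^ 4) := div_lt_div_of_pos_right hab (two_sub_pow_four_pos ha)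
    _ ≤ b / (2 - b ^ 4) := div_le_div_of_nonneg_left hb.1 (two_sub_pow_four_pos hb)
        (by linarith [pow_le_pow_left₀ ha.1 hab.le 4])

lemma branchParam_continuousOn : ContinuousOn branchParam (Icc 0 1) :=
  continuousOn_id.div (by fun_prop) fun _ hs => (two_sub_pow_four_pos hs).ne'

lemma mul_sub_pow_four_eq_of_branchParam_eq {s t : ℝ} (hs : s ∈ Icc (0 : ℝ) 1)
    (h : branchParam s = t) : t * (2 - s ^ 4) = s := by
  rw [← h, branchParam, div_mul_cancel₀ _ (two_sub_pow_four_pos hs).ne']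

variable {t s y : ℝ}

lemma mul_sq_sub_sub_pow_four_injOn (ht : t ≠ 0) :
    InjOn (fun v => v * t ^ 2 - (v - 2 * t ^ 2) ^ 4) (Iic (2 * t ^ 2)) := by
  refine StrictMonoOn.injOn fun v _ w hw hvw => ?_
  have hscale : v * t ^ 2 < w * t ^ 2 := mul_lt_mul_of_pos_right hvw (by positivity)
  have hpow : (2 * t ^ 2 - w) ^ 4 < (2 * t ^ 2 - v) ^ 4 :=
    pow_lt_pow_left₀ (by linarith) (by linarith [mem_Iic.1 hw]) (by norm_num)
  linear_combination hscale + hpow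

lemma branch_mem_slice (hts : t * (2 - s ^ 4) = s) :
    (t * s ^ 2) ^ 2 * t ^ 2 = ((t * s ^ 2) ^ 2 - 2 * t ^ 2) ^ 4 := by
  linear_combination
    -t ^ 4 * (s + t * (2 - s ^ 4)) * (s ^ 2 + (t * (2 - s ^ 4)) ^ 2) * hts

lemma abs_le_and_mem_slice_iff (ht : 0 ≤ t) (hs : s ∈ Icc (0 : ℝ) 1)
    (hts : t * (2 - s ^ 4) = s) :
    |y| ≤ t ∧ y ^ 2 * t ^ 2 = (y ^ 2 - 2 * t ^ 2) ^ 4 ↔ |y| = t * s ^ 2 := by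
  have hbranch_le : t * s ^ 2 ≤ t := mul_le_of_le_one_right ht (pow_le_one₀ hs.1 hs.2)
  constructor
  · rintro ⟨hyt, hy⟩
    rcases ht.eq_or_lt with rfl | ht
    · simpa using le_antisymm hyt (abs_nonneg y)
    have hbranch_nonneg : 0 ≤ t * s ^ 2 := by positivity
    have sq_le {a : ℝ} (ha : |a| ≤ t) : a ^ 2 ≤ 2 * t ^ 2 := by nlinarith [sq_abs a, abs_nonneg a]
    have hsq : y ^ 2 = (t * s ^ 2) ^ 2 :=
      mul_sq_sub_sub_pow_four_injOn ht.ne' (sq_le hyt)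
        (sq_le (by rwa [abs_of_nonneg hbranch_nonneg])) <| by
        simp only [hy, branch_mem_slice hts, sub_self]
    rw [← abs_of_nonneg hbranch_nonneg]
    exact sq_eq_sq_iff_abs_eq_abs _ _ |>.1 hsq
  · intro hy
    have hsq : y ^ 2 = (t * s ^ 2) ^ 2 := by rw [← sq_abs, hy]
    exact ⟨hy ▸ hbranch_le, hsq ▸ branch_mem_slice hts⟩

lemma pos_of_mul_sub_pow_four_eq (ht : 0 < t) (hs : 0 ≤ s) (hts : t * (2 - s ^ 4) = s) :
    0 < s :=
  hs.lt_of_ne <| by rintro rfl; norm_num at hts; linarith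

lemma exists_continuous_branchParam_inv :
    ∃ ψ : ℝ → ℝ, Continuous ψ ∧ (∀ t, ψ t ∈ Icc (0 : ℝ) 1) ∧
      ∀ t ∈ Icc (0 : ℝ) 1, t * (2 - ψ t ^ 4) = ψ t := by
  obtain ⟨ψ, hψ, hmem, hinv⟩ :=
    branchParam_strictMonoOn.exists_continuous_rightInvOn_Icc zero_le_one branchParam_continuousOn
  rw [branchParam_zero, branchParam_one] at hinv
  exact ⟨ψ, hψ, hmem, fun t ht => mul_sub_pow_four_eq_of_branchParam_eq (hmem t) (hinv ht)⟩

variable {ψ : ℝ → ℝ}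

lemma inter_slice_eq {ε : ℝ} (hε : ε ≤ 1) (hmem : ∀ t, ψ t ∈ Icc (0 : ℝ) 1)
    (hrel : ∀ t ∈ Icc (0 : ℝ) 1, t * (2 - ψ t ^ 4) = ψ t) :
    SurfaceG ∩ {p | p 0 = 0 ∧ p 3 < ε} =
      {p : EuclideanSpace ℝ (Fin 4) | p 0 = 0 ∧ p 2 = 0 ∧ 0 ≤ p 3 ∧ p 3 < ε ∧
        (p 1 = p 3 * ψ (p 3) ^ 2 ∨ p 1 = -(p 3 * ψ (p 3) ^ 2))} := by
  ext p
  simp only [SurfaceG, mem_inter_iff, mem_ofPred_eq]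
  constructor
  · rintro ⟨⟨hy, hz, hyt, ht1⟩, hx, htε⟩
    have ht0 : 0 ≤ p 3 := (abs_nonneg _).trans hyt
    have hslice := (abs_le_and_mem_slice_iff ht0 (hmem _) (hrel _ ⟨ht0, ht1⟩)).1
      ⟨hyt, by rw [hx] at hy; linear_combination hy⟩
    exact ⟨hx, hz, ht0, htε, (abs_eq (mul_nonneg ht0 (sq_nonneg _))).1 hslice⟩
  · rintro ⟨hx, hz, ht0, htε, hy⟩
    have ht1 : p 3 ≤ 1 := htε.le.trans hε
    obtain ⟨hyt, hslice⟩ := (abs_le_and_mem_slice_iff ht0 (hmem _) (hrel _ ⟨ht0, ht1⟩)).2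
      ((abs_eq (mul_nonneg ht0 (sq_nonneg _))).2 hy)
    exact ⟨⟨by rw [hx]; linear_combination hslice, hz, hyt, ht1⟩, hx, htε⟩

lemma tendsto_branch_div_cube (hψ : ContinuousAt ψ 0)
    (hrel : ∀ t ∈ Icc (0 : ℝ) 1, t * (2 - ψ t ^ 4) = ψ t) :
    Tendsto (fun t => t * ψ t ^ 2 / t ^ 3) (nhdsWithin 0 (Ioi 0)) (nhds 4) := by
  have hψ0 : ψ 0 = 0 := by simpa using (hrel 0 ⟨le_rfl, zero_le_one⟩).symm
  have hlim : Tendsto (fun t => (2 - ψ t ^ 4) ^ 2) (nhds 0) (nhds ((2 - ψ 0 ^ 4) ^ 2)) :=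
    (tendsto_const_nhds.sub (hψ.tendsto.pow 4)).pow 2
  rw [hψ0] at hlim
  norm_num at hlim
  refine (hlim.mono_left nhdsWithin_le_nhds).congr' ?_
  filter_upwards [Ioo_mem_nhdsGT zero_lt_one] with t ht
  have hts := hrel t ⟨ht.1.le, ht.2.le⟩
  rw [eq_div_iff (pow_pos ht.1 3).ne']
  linear_combination (t * (t * (2 - ψ t ^ 4) + ψ t)) * hts

end SurfaceG

/-- near the origin, the slice of `G` by `{x = 0}` consists of the two
branches `y = ±f(t)` for a continuous function `f` with `f(0) = 0`, `f(t) > 0` for `t > 0`,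
and `f(t)/t³ → 4` as `t → 0⁺`; so the two branches of `G` over `x = 0` have tangency
order `3` at the origin. -/
theorem surfaceG_branches_tangency_order_three :
    ∃ ε : ℝ, 0 < ε ∧ ε < 1 ∧
      ∃ f : ℝ → ℝ, ContinuousOn f (Set.Ico 0 ε) ∧ f 0 = 0 ∧
        (∀ t : ℝ, 0 < t → t < ε → 0 < f t) ∧
        SurfaceG ∩ {p | p 0 = 0 ∧ p 3 < ε} =
          {p : EuclideanSpace ℝ (Fin 4) | p 0 = 0 ∧ p 2 = 0 ∧ 0 ≤ p 3 ∧ p 3 < ε ∧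
            (p 1 = f (p 3) ∨ p 1 = -f (p 3))} ∧
        Tendsto (fun t : ℝ => f t / t ^ 3) (nhdsWithin 0 (Set.Ioi (0 : ℝ))) (nhds 4) := by
  obtain ⟨ψ, hψ, hmem, hrel⟩ := SurfaceG.exists_continuous_branchParam_inv
  refine ⟨1 / 2, by norm_num, by norm_num, fun t => t * ψ t ^ 2,
    (continuous_id.mul (hψ.pow 2)).continuousOn, by simp, fun t ht htε => ?_,
    SurfaceG.inter_slice_eq (by norm_num) hmem hrel,
    SurfaceG.tendsto_branch_div_cube hψ.continuousAt hrel⟩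
  exact mul_pos ht <| pow_pos (SurfaceG.pos_of_mul_sub_pow_four_eq ht (hmem t).1
    (hrel t ⟨ht.le, by linarith⟩)) 2
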